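/- arXiv:2208.11655 — 2 statements merged into one kernel-verified Lean document; each statement's English description precedes it below -/
import Mathlib

section
/- Let f : C² → C be a convenient mixed polynomial which is strongly Newton non-degenerate. Then f has a strongly Newton inner non-degenerate boundary. -/
open Complex

noncomputable section

/-- The index of a mixed monomial: `((ν₁,ν₂),(μ₁,μ₂))`. -/
abbrev MixedIdx : Type := (ℕ × ℕ) × (ℕ × ℕ)

/-- The coefficients `c_{ν,μ}` of a mixed polynomial `f(z,z̄) = Σ c_{ν,μ} z^ν z̄^μ`. -/
abbrev MixedCoeff : Type := MixedIdx → ℂ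

/-- The exponent `ν + μ` of a mixed monomial index. -/
def expo (p : MixedIdx) : ℕ × ℕ := (p.1.1 + p.2.1, p.1.2 + p.2.2)

/-- The linear form `ℓ_P` associated to a weight vector `P`; `ℓ_P ∘ expo` is the
radial degree `rdeg_P`. -/
def ellP (P : ℕ × ℕ) (w : ℕ × ℕ) : ℕ := P.1 * w.1 + P.2 * w.2

/-- The mixed monomial `u^ν₁ v^ν₂ ū^μ₁ v̄^μ₂`. -/
def mono (p : MixedIdx) (u v : ℂ) : ℂ :=
  u ^ p.1.1 * v ^ p.1.2 * (starRingEnd ℂ u) ^ p.2.1 * (starRingEnd ℂ v) ^ p.2.2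

/-- Evaluation of the mixed polynomial with coefficients `c` at `(u,v) ∈ ℂ²`. -/
def eval (c : MixedCoeff) (u v : ℂ) : ℂ := ∑ᶠ p, c p * mono p u v

/-- `c` has finitely many nonzero coefficients (so it really is a polynomial). -/
def FiniteSupp (c : MixedCoeff) : Prop := (Function.support c).Finite

/-- Wirtinger derivative `∂/∂u` at the level of coefficients. -/
def Du (c : MixedCoeff) : MixedCoeff := fun p => (p.1.1 + 1 : ℂ) * c ((p.1.1 + 1, p.1.2), p.2)

/-- Wirtinger derivative `∂/∂ū` at the level of coefficients. -/
def Dub (c : MixedCoeff) : MixedCoeff := fun p => (p.2.1 + 1 : ℂ) * c (p.1, (p.2.1 + 1, p.2.2))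

/-- Wirtinger derivative `∂/∂v` at the level of coefficients. -/
def Dv (c : MixedCoeff) : MixedCoeff := fun p => (p.1.2 + 1 : ℂ) * c ((p.1.1, p.1.2 + 1), p.2)

/-- Wirtinger derivative `∂/∂v̄` at the level of coefficients. -/
def Dvb (c : MixedCoeff) : MixedCoeff := fun p => (p.2.2 + 1 : ℂ) * c (p.1, (p.2.1, p.2.2 + 1))

/-- `(u,v)` is a critical point of the mixed polynomial `c` (the real Jacobian of the
associated map `ℝ⁴ → ℝ²` has rank `≤ 1`), expressed through Oka's equations
`s₁ = s₂ = s₃ = 0`. -/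
def Crit (c : MixedCoeff) (u v : ℂ) : Prop :=
  eval (Du c) u v * starRingEnd ℂ (eval (Dvb c) u v)
      - starRingEnd ℂ (eval (Dub c) u v) * eval (Dv c) u v = 0 ∧
  ‖eval (Du c) u v‖ = ‖eval (Dub c) u v‖ ∧
  ‖eval (Dv c) u v‖ = ‖eval (Dvb c) u v‖

/-- `d(P; c)`: the minimal radial degree of a monomial of `c` w.r.t. the weight `P`. -/
def dmin (P : ℕ × ℕ) (c : MixedCoeff) : ℕ :=
  sInf {n : ℕ | ∃ p, c p ≠ 0 ∧ ellP P (expo p) = n}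

/-- The `P`-relative face function: the monomials of minimal radial degree. -/
def face (P : ℕ × ℕ) (c : MixedCoeff) : MixedCoeff :=
  fun p => if ellP P (expo p) = dmin P c then c p else 0

/-- The face function of the vertex `w`: all monomials with exponent `w`. -/
def vertexFace (w : ℕ × ℕ) (c : MixedCoeff) : MixedCoeff :=
  fun p => if expo p = w then c p else 0

/-- `P` is the (primitive, positive) weight vector of a compact 1-face of the Newton
boundary of `c`: at least two distinct exponents realize the minimal radial degree. -/
def IsFaceWeight (c : MixedCoeff) (P : ℕ × ℕ) : Prop :=
  0 < P.1 ∧ 0 < P.2 ∧ Nat.gcd P.1 P.2 = 1 ∧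
  ∃ p q, c p ≠ 0 ∧ c q ≠ 0 ∧ expo p ≠ expo q ∧
    ellP P (expo p) = dmin P c ∧ ellP P (expo q) = dmin P c

/-- `P` is the weight vector of the steepest compact 1-face (the face `Δ(P₁)`). -/
def IsSteepest (c : MixedCoeff) (P : ℕ × ℕ) : Prop :=
  IsFaceWeight c P ∧ ∀ Q, IsFaceWeight c Q → Q.1 * P.2 ≤ P.1 * Q.2

/-- `P` is the weight vector of the least steep compact 1-face (the face `Δ(P_N)`). -/
def IsLeastSteep (c : MixedCoeff) (P : ℕ × ℕ) : Prop :=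
  IsFaceWeight c P ∧ ∀ Q, IsFaceWeight c Q → P.1 * Q.2 ≤ Q.1 * P.2

/-- `w` is a non-extreme vertex of the Newton boundary: a vertex (an exponent of `c`
lying on the boundary) bounding two different compact 1-faces. -/
def NonExtremeVertex (c : MixedCoeff) (w : ℕ × ℕ) : Prop :=
  (∃ p, c p ≠ 0 ∧ expo p = w) ∧
  ∃ P Q, IsFaceWeight c P ∧ IsFaceWeight c Q ∧ P.1 * Q.2 ≠ Q.1 * P.2 ∧
    ellP P w = dmin P c ∧ ellP Q w = dmin Q c

/-- `c` has an inner Newton non-degenerate boundary. -/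
def InnerNonDeg (c : MixedCoeff) : Prop :=
  (∀ P, IsSteepest c P → ∀ u v : ℂ, v ≠ 0 →
      eval (face P c) u v = 0 → ¬ Crit (face P c) u v) ∧
  (∀ P, IsLeastSteep c P → ∀ u v : ℂ, u ≠ 0 →
      eval (face P c) u v = 0 → ¬ Crit (face P c) u v) ∧
  (∀ P, IsFaceWeight c P → ∀ u v : ℂ, u ≠ 0 → v ≠ 0 →
      eval (face P c) u v = 0 → ¬ Crit (face P c) u v) ∧
  (∀ w, NonExtremeVertex c w → ∀ u v : ℂ, u ≠ 0 → v ≠ 0 →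
      eval (vertexFace w c) u v = 0 → ¬ Crit (vertexFace w c) u v)

/-- `c` has a strongly inner Newton non-degenerate boundary. -/
def StronglyInnerNonDeg (c : MixedCoeff) : Prop :=
  (∀ P, IsSteepest c P → ∀ u v : ℂ, v ≠ 0 → ¬ Crit (face P c) u v) ∧
  (∀ P, IsLeastSteep c P → ∀ u v : ℂ, u ≠ 0 → ¬ Crit (face P c) u v) ∧
  (∀ P, IsFaceWeight c P → ∀ u v : ℂ, u ≠ 0 → v ≠ 0 → ¬ Crit (face P c) u v) ∧
  (∀ w, NonExtremeVertex c w → ∀ u v : ℂ, u ≠ 0 → v ≠ 0 → ¬ Crit (vertexFace w c) u v)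

/-- Oka's Newton non-degeneracy: for every compact face (equivalently, for every
positive weight vector `Q`) the face function has no critical points on its zero set
in `(ℂ*)²`. -/
def NewtonNonDeg (c : MixedCoeff) : Prop :=
  ∀ Q : ℕ × ℕ, 0 < Q.1 → 0 < Q.2 → ∀ u v : ℂ, u ≠ 0 → v ≠ 0 →
    eval (face Q c) u v = 0 → ¬ Crit (face Q c) u v

/-- Oka's strong Newton non-degeneracy: every face function has no critical points
in `(ℂ*)²`. -/
def StronglyNewtonNonDeg (c : MixedCoeff) : Prop :=
  ∀ Q : ℕ × ℕ, 0 < Q.1 → 0 < Q.2 → ∀ u v : ℂ, u ≠ 0 → v ≠ 0 →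
    ¬ Crit (face Q c) u v

/-- The Newton boundary meets the horizontal axis. -/
def UConvenient (c : MixedCoeff) : Prop := ∃ p, c p ≠ 0 ∧ (expo p).2 = 0

/-- The Newton boundary meets the vertical axis. -/
def VConvenient (c : MixedCoeff) : Prop := ∃ p, c p ≠ 0 ∧ (expo p).1 = 0

/-- The monomial index `p` lies on the Newton boundary of `c`. -/
def OnBoundary (c : MixedCoeff) (p : MixedIdx) : Prop :=
  ∃ Q : ℕ × ℕ, 0 < Q.1 ∧ 0 < Q.2 ∧ ellP Q (expo p) = dmin Q c

/-!
On the open torus every condition is an instance of strong non-degeneracy, and a non-extreme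
vertex face is the face function of the sum of the weights of its two adjacent edges. The only
new case is the steepest face at a point `(0, v)`: there it only sees the monomials without `u`,
and by convenience and finiteness the steepest face contains the lowest exponent `(0, m)` of the
`v`-axis, so these are the monomials of the vertex face at `(0, m)`, which is the face function
of the weight `(m + 1, 1)`. The least steep face is the same statement after exchanging `u`
and `v`.
-/

section Faces

variable {c : MixedCoeff}

lemma dmin_le (P : ℕ × ℕ) {p : MixedIdx} (hp : c p ≠ 0) : dmin P c ≤ ellP P (expo p) :=
  Nat.sInf_le ⟨p, hp, rfl⟩

lemma dmin_eq_ellP {P : ℕ × ℕ} {p : MixedIdx} (hp : c p ≠ 0)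
    (hmin : ∀ q, c q ≠ 0 → ellP P (expo p) ≤ ellP P (expo q)) :
    dmin P c = ellP P (expo p) :=
  le_antisymm (dmin_le P hp) <|
    le_csInf ⟨_, p, hp, rfl⟩ (by rintro _ ⟨q, hq, rfl⟩; exact hmin q hq)

lemma face_eq_vertexFace {Q : ℕ × ℕ} {p : MixedIdx} (hp : c p ≠ 0)
    (hmin : ∀ q, c q ≠ 0 → expo q ≠ expo p → ellP Q (expo p) < ellP Q (expo q)) :
    face Q c = vertexFace (expo p) c := by
  have hd : dmin Q c = ellP Q (expo p) := dmin_eq_ellP hp fun q hq => by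
    by_cases h : expo q = expo p
    · rw [h]
    · exact (hmin q hq h).le
  funext q
  by_cases hq : c q = 0
  · simp [face, vertexFace, hq]
  by_cases h : expo q = expo p
  · simp [face, vertexFace, hd, h]
  · simp [face, vertexFace, hd, h, (hmin q hq h).ne']

lemma eq_of_ellP_eq_of_ellP_eq {P Q x w : ℕ × ℕ} (hdet : P.1 * Q.2 ≠ Q.1 * P.2)
    (hP : ellP P x = ellP P w) (hQ : ellP Q x = ellP Q w) : x = w := by
  simp only [ellP] at hP hQ
  zify at hP hQ hdet
  have hdet' : (P.1 * Q.2 - Q.1 * P.2 : ℤ) ≠ 0 := sub_ne_zero.mpr hdet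
  have h1 : (P.1 * Q.2 - Q.1 * P.2 : ℤ) * (x.1 - w.1) = 0 := by
    linear_combination (Q.2 : ℤ) * hP - (P.2 : ℤ) * hQ
  have h2 : (P.1 * Q.2 - Q.1 * P.2 : ℤ) * (x.2 - w.2) = 0 := by
    linear_combination (P.1 : ℤ) * hQ - (Q.1 : ℤ) * hP
  have e1 := sub_eq_zero.mp ((mul_eq_zero.mp h1).resolve_left hdet')
  have e2 := sub_eq_zero.mp ((mul_eq_zero.mp h2).resolve_left hdet')
  exact Prod.ext (by exact_mod_cast e1) (by exact_mod_cast e2)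

lemma NonExtremeVertex.exists_face_eq {w : ℕ × ℕ} (hw : NonExtremeVertex c w) :
    ∃ Q : ℕ × ℕ, 0 < Q.1 ∧ 0 < Q.2 ∧ face Q c = vertexFace w c := by
  obtain ⟨⟨p, hp, rfl⟩, P, Q, hP, hQ, hdet, hPw, hQw⟩ := hw
  refine ⟨(P.1 + Q.1, P.2 + Q.2), by have := hP.1; omega, by have := hP.2.1; omega,
    face_eq_vertexFace hp fun q hq hqp => ?_⟩
  have hsum : ∀ x, ellP (P.1 + Q.1, P.2 + Q.2) x = ellP P x + ellP Q x := fun x => by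
    simp only [ellP]; ring
  have h1 := hPw ▸ dmin_le P hq
  have h2 := hQw ▸ dmin_le Q hq
  rw [hsum, hsum]
  by_contra! hle
  exact hqp (eq_of_ellP_eq_of_ellP_eq hdet (by omega) (by omega))

end Faces

lemma mono_zero_left {p : MixedIdx} (hp : (expo p).1 ≠ 0) (v : ℂ) : mono p 0 v = 0 := by
  obtain h | h : p.1.1 ≠ 0 ∨ p.2.1 ≠ 0 := by simp only [expo] at hp; omega
  all_goals simp [mono, zero_pow h]

lemma mono_left_eq {p : MixedIdx} (hp : (expo p).1 = 0) (u u' v : ℂ) :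
    mono p u v = mono p u' v := by
  obtain ⟨h1, h2⟩ := Nat.add_eq_zero_iff.mp hp
  simp [mono, h1, h2]

lemma eval_zero_left_congr {a b : MixedCoeff} (h : ∀ p, (expo p).1 = 0 → a p = b p) (v : ℂ) :
    eval a 0 v = eval b 0 v :=
  finsum_congr fun p => by
    by_cases hp : (expo p).1 = 0
    · rw [h p hp]
    · simp [mono_zero_left hp]

lemma eval_left_eq {a : MixedCoeff} (ha : ∀ p, (expo p).1 ≠ 0 → a p = 0) (u u' v : ℂ) :
    eval a u v = eval a u' v :=
  finsum_congr fun p => by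
    by_cases hp : (expo p).1 = 0
    · rw [mono_left_eq hp u u' v]
    · simp [ha p hp]

/-- At a point `(0, v)` only the monomials without `u` are seen, and they enter the critical
point condition only through `‖∂F/∂v‖ = ‖∂F/∂v̄‖`; for a `u`-free `g` this is the whole
condition, at every `u`. -/
lemma Crit.of_zero_left {F g : MixedCoeff} (hg : ∀ p, (expo p).1 ≠ 0 → g p = 0)
    (hFg : ∀ p, (expo p).1 = 0 → F p = g p) {v : ℂ} (h : Crit F 0 v) (u : ℂ) :
    Crit g u v := by
  have hDu : Du g = 0 := funext fun p => by
    simp only [Du]; rw [hg _ (by simp [expo]), mul_zero]; rfl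
  have hDub : Dub g = 0 := funext fun p => by
    simp only [Dub]; rw [hg _ (by simp [expo]), mul_zero]; rfl
  have hDv : eval (Dv g) u v = eval (Dv F) 0 v := by
    rw [eval_left_eq
      (fun p hp => by simp only [Dv]; rw [hg _ (by simpa [expo] using hp), mul_zero]) u 0 v]
    refine (eval_zero_left_congr (fun p hp => ?_) v).symm
    simp only [Dv]; rw [hFg _ (by simpa [expo] using hp)]
  have hDvb : eval (Dvb g) u v = eval (Dvb F) 0 v := by
    rw [eval_left_eq
      (fun p hp => by simp only [Dvb]; rw [hg _ (by simpa [expo] using hp), mul_zero]) u 0 v]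
    refine (eval_zero_left_congr (fun p hp => ?_) v).symm
    simp only [Dvb]; rw [hFg _ (by simpa [expo] using hp)]
  have h0 : eval 0 u v = 0 := by simp [eval]
  refine ⟨by simp [hDu, hDub, h0], by simp [hDu, hDub, h0], ?_⟩
  rw [hDv, hDvb]
  exact h.2.2

section Steepest

variable {c : MixedCoeff}

def IsLowestOnVAxis (c : MixedCoeff) (p : MixedIdx) : Prop :=
  c p ≠ 0 ∧ (expo p).1 = 0 ∧ ∀ q, c q ≠ 0 → (expo q).1 = 0 → (expo p).2 ≤ (expo q).2

lemma VConvenient.exists_isLowestOnVAxis (hfin : FiniteSupp c) (hvc : VConvenient c) :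
    ∃ p, IsLowestOnVAxis c p := by
  obtain ⟨p, ⟨hp, hpv⟩, hmin⟩ := Set.exists_min_image {p | c p ≠ 0 ∧ (expo p).1 = 0}
    (fun p => (expo p).2) (hfin.subset fun _ hp => hp.1) hvc
  exact ⟨p, hp, hpv, fun q hq hqv => hmin q ⟨hq, hqv⟩⟩

lemma exists_isFaceWeight_of_two_minimizers {R : ℕ × ℕ} (hR1 : 0 < R.1) (hR2 : 0 < R.2)
    {p q : MixedIdx} (hp : c p ≠ 0) (hq : c q ≠ 0) (hpq : expo p ≠ expo q)
    (hmin : ∀ r, c r ≠ 0 → ellP R (expo p) ≤ ellP R (expo r))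
    (hqp : ellP R (expo q) = ellP R (expo p)) :
    ∃ R', IsFaceWeight c R' ∧ dmin R' c = ellP R' (expo p) := by
  set g := Nat.gcd R.1 R.2
  have hg : 0 < g := Nat.gcd_pos_of_pos_left _ hR1
  set R' : ℕ × ℕ := (R.1 / g, R.2 / g)
  have hscale : ∀ w, ellP R w = g * ellP R' w := fun w => by
    simp only [ellP, R', mul_add, ← mul_assoc]
    rw [Nat.mul_div_cancel' (Nat.gcd_dvd_left _ _), Nat.mul_div_cancel' (Nat.gcd_dvd_right _ _)]
  have hd : dmin R' c = ellP R' (expo p) := dmin_eq_ellP hp fun r hr =>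
    Nat.le_of_mul_le_mul_left (by rw [← hscale, ← hscale]; exact hmin r hr) hg
  refine ⟨R', ⟨Nat.div_pos (Nat.le_of_dvd hR1 (Nat.gcd_dvd_left _ _)) hg,
    Nat.div_pos (Nat.le_of_dvd hR2 (Nat.gcd_dvd_right _ _)) hg, Nat.coprime_div_gcd_div_gcd hg,
    p, q, hp, hq, hpq, hd.symm, ?_⟩, hd⟩
  rw [hd]
  exact Nat.eq_of_mul_eq_mul_left hg (by rw [← hscale, ← hscale, hqp])

/-- The edge of the Newton boundary leaving the lowest point `(0, m)` of the `v`-axis: its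
other endpoint minimizes the slope `w.1 / (m - w.2)` over the exponents below height `m`. -/
lemma IsLowestOnVAxis.exists_isFaceWeight (hfin : FiniteSupp c) {p₀ : MixedIdx}
    (hp₀ : IsLowestOnVAxis c p₀) {q₀ : MixedIdx} (hq₀ : c q₀ ≠ 0)
    (hq₀m : (expo q₀).2 < (expo p₀).2) :
    ∃ R, IsFaceWeight c R ∧ dmin R c = R.2 * (expo p₀).2 := by
  obtain ⟨hp₀c, hp₀v, hlow⟩ := hp₀
  set m := (expo p₀).2
  obtain ⟨q, ⟨hq, hqm⟩, hqmin⟩ := Set.exists_min_image {p | c p ≠ 0 ∧ (expo p).2 < m}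
    (fun p => ((expo p).1 : ℚ) / (m - (expo p).2)) (hfin.subset fun _ hp => hp.1)
    ⟨q₀, hq₀, hq₀m⟩
  set a := (expo q).1
  set b := (expo q).2
  have ha : 0 < a := Nat.pos_of_ne_zero fun h => (hlow q hq h).not_gt hqm
  obtain ⟨k, hk⟩ : ∃ k, m = b + k := ⟨m - b, by omega⟩
  have hcross : ∀ r, c r ≠ 0 → (expo r).2 < m →
      (a : ℚ) * (m - (expo r).2) ≤ (expo r).1 * k := by
    intro r hr hrm
    have h := hqmin r ⟨hr, hrm⟩
    have hqm' : (b : ℚ) < m := by exact_mod_cast hqm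
    have hrm' : ((expo r).2 : ℚ) < m := by exact_mod_cast hrm
    rw [div_le_div_iff₀ (by linarith) (by linarith)] at h
    simpa [hk] using h
  refine (exists_isFaceWeight_of_two_minimizers (R := (k, a)) (by omega) ha hp₀c hq
    (fun h => by have := congrArg Prod.fst h; omega) (fun r hr => ?_) ?_).imp
    fun R hR => ⟨hR.1, by rw [hR.2]; simp [ellP, hp₀v, m]⟩
  · simp only [ellP, hp₀v]
    by_cases hrm : (expo r).2 < m
    · have := hcross r hr hrm
      qify
      linarith
    · nlinarith
  · simp only [ellP, hp₀v]
    change k * a + a * b = k * 0 + a * m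
    rw [hk]
    ring

lemma IsSteepest.dmin_eq (hfin : FiniteSupp c) {P : ℕ × ℕ} (hP : IsSteepest c P)
    {p₀ : MixedIdx} (hp₀ : IsLowestOnVAxis c p₀) : dmin P c = P.2 * (expo p₀).2 := by
  refine le_antisymm (by simpa [ellP, hp₀.2.1] using dmin_le P hp₀.1) ?_
  obtain ⟨⟨-, hP2, -, q, -, hq, -, -, hqd, -⟩, hsteep⟩ := hP
  rw [← hqd]
  simp only [ellP]
  by_cases hqm : (expo p₀).2 ≤ (expo q).2
  · nlinarith
  obtain ⟨R, hR, hRd⟩ := hp₀.exists_isFaceWeight hfin hq (by omega)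
  have hRP := hsteep R hR
  have hRq := hRd ▸ dmin_le R hq
  simp only [ellP] at hRq
  nlinarith [hR.2.1]

lemma IsLowestOnVAxis.face_eq_vertexFace {p₀ : MixedIdx} (hp₀ : IsLowestOnVAxis c p₀) :
    face ((expo p₀).2 + 1, 1) c = vertexFace (expo p₀) c := by
  obtain ⟨hp₀c, hp₀v, hlow⟩ := hp₀
  refine _root_.face_eq_vertexFace hp₀c fun q hq hqp => ?_
  simp only [ellP, hp₀v]
  rcases Nat.eq_zero_or_pos (expo q).1 with hq0 | hq0
  · have hm := hlow q hq hq0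
    have hne : (expo q).2 ≠ (expo p₀).2 := fun h => hqp (Prod.ext (hq0.trans hp₀v.symm) h)
    simp only [hq0]
    omega
  · nlinarith

lemma IsSteepest.not_crit_face (hfin : FiniteSupp c) (hvc : VConvenient c)
    (hsnd : StronglyNewtonNonDeg c) {P : ℕ × ℕ} (hP : IsSteepest c P) {u v : ℂ}
    (hv : v ≠ 0) :
    ¬ Crit (face P c) u v := by
  rcases eq_or_ne u 0 with rfl | hu
  swap
  · exact hsnd P hP.1.1 hP.1.2.1 u v hu hv
  intro hcrit
  obtain ⟨p₀, hp₀⟩ := hvc.exists_isLowestOnVAxis hfin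
  refine hsnd ((expo p₀).2 + 1, 1) (Nat.succ_pos _) one_pos 1 v one_ne_zero hv ?_
  rw [hp₀.face_eq_vertexFace]
  refine hcrit.of_zero_left (fun p hp => if_neg fun h => hp (by rw [h, hp₀.2.1]))
    (fun p hp => ?_) 1
  have hiff : ellP P (expo p) = dmin P c ↔ expo p = expo p₀ := by
    rw [hP.dmin_eq hfin hp₀, Prod.ext_iff, hp, hp₀.2.1]
    simp [ellP, hp, hP.1.2.1.ne']
  exact if_congr hiff rfl rfl

end Steepest

section Swap

variable {c : MixedCoeff}

def swapIdx : MixedIdx ≃ MixedIdx := (Equiv.prodComm ℕ ℕ).prodCongr (Equiv.prodComm ℕ ℕ)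

/-- The coefficients of `(u, v) ↦ f (v, u)`. -/
def swapVars (c : MixedCoeff) : MixedCoeff := c ∘ swapIdx

@[simp] lemma expo_swapIdx_symm (p : MixedIdx) : expo (swapIdx.symm p) = (expo p).swap := rfl

lemma ellP_swap (P w : ℕ × ℕ) : ellP P.swap w = ellP P w.swap := by
  simp only [ellP, Prod.fst_swap, Prod.snd_swap]
  ring

lemma mono_swapIdx (p : MixedIdx) (u v : ℂ) : mono (swapIdx p) v u = mono p u v := by
  simp only [mono, swapIdx, Equiv.prodCongr_apply, Prod.map, Equiv.prodComm_apply, Prod.fst_swap,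
    Prod.snd_swap]
  ring

lemma dmin_swapVars (P : ℕ × ℕ) : dmin P.swap (swapVars c) = dmin P c := by
  unfold dmin
  congr 1
  ext n
  constructor
  · rintro ⟨p, hp, rfl⟩
    exact ⟨swapIdx p, hp, (ellP_swap P (expo p)).symm⟩
  · rintro ⟨p, hp, rfl⟩
    exact ⟨swapIdx.symm p, hp, by rw [expo_swapIdx_symm, ellP_swap, Prod.swap_swap]⟩

lemma face_swapVars (P : ℕ × ℕ) : face P.swap (swapVars c) = swapVars (face P c) :=
  funext fun p => by simp only [face, dmin_swapVars, ellP_swap]; rfl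

lemma eval_swapVars (u v : ℂ) : eval (swapVars c) u v = eval c v u := by
  rw [eval, eval, ← finsum_comp_equiv swapIdx]
  exact finsum_congr fun p => by rw [mono_swapIdx]; rfl

lemma crit_swapVars {u v : ℂ} : Crit (swapVars c) u v ↔ Crit c v u := by
  have hDu : Du (swapVars c) = swapVars (Dv c) := rfl
  have hDub : Dub (swapVars c) = swapVars (Dvb c) := rfl
  have hDv : Dv (swapVars c) = swapVars (Du c) := rfl
  have hDvb : Dvb (swapVars c) = swapVars (Dub c) := rfl
  simp only [Crit, hDu, hDub, hDv, hDvb, eval_swapVars]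
  rw [← neg_eq_zero, show ∀ a b d e : ℂ, -(a * starRingEnd ℂ b - starRingEnd ℂ d * e) =
    e * starRingEnd ℂ d - starRingEnd ℂ b * a from fun _ _ _ _ => by ring]
  tauto

lemma FiniteSupp.swapVars (h : FiniteSupp c) : FiniteSupp (swapVars c) := by
  rw [FiniteSupp, _root_.swapVars, Function.support_comp_eq_preimage]
  exact h.preimage swapIdx.injective.injOn

lemma UConvenient.swapVars (h : UConvenient c) : VConvenient (swapVars c) := by
  obtain ⟨p, hp, hp2⟩ := h
  exact ⟨swapIdx.symm p, hp, hp2⟩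

lemma IsFaceWeight.swapVars {P : ℕ × ℕ} (h : IsFaceWeight c P) :
    IsFaceWeight (swapVars c) P.swap := by
  obtain ⟨h1, h2, hg, p, q, hp, hq, hpq, hpd, hqd⟩ := h
  refine ⟨h2, h1, (Nat.gcd_comm _ _).trans hg, swapIdx.symm p, swapIdx.symm q, hp, hq,
    by simpa using hpq, ?_, ?_⟩ <;>
  simpa [ellP_swap, dmin_swapVars]

lemma isFaceWeight_swapVars {P : ℕ × ℕ} :
    IsFaceWeight (swapVars c) P ↔ IsFaceWeight c P.swap :=
  ⟨IsFaceWeight.swapVars, fun h => by simpa using h.swapVars⟩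

lemma IsLeastSteep.swapVars {P : ℕ × ℕ} (h : IsLeastSteep c P) :
    IsSteepest (swapVars c) P.swap :=
  ⟨h.1.swapVars, fun Q hQ => by
    have := h.2 Q.swap (isFaceWeight_swapVars.mp hQ)
    simp only [Prod.fst_swap, Prod.snd_swap] at this ⊢
    linarith [mul_comm P.1 Q.1, mul_comm Q.2 P.2]⟩

lemma StronglyNewtonNonDeg.swapVars (h : StronglyNewtonNonDeg c) :
    StronglyNewtonNonDeg (swapVars c) := by
  intro Q h1 h2 u v hu hv hcrit
  rw [← Prod.swap_swap Q, face_swapVars, crit_swapVars] at hcrit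
  exact h Q.swap h2 h1 v u hv hu hcrit

lemma IsLeastSteep.not_crit_face (hfin : FiniteSupp c) (huc : UConvenient c)
    (hsnd : StronglyNewtonNonDeg c) {P : ℕ × ℕ} (hP : IsLeastSteep c P) {u v : ℂ}
    (hu : u ≠ 0) :
    ¬ Crit (face P c) u v := by
  rw [← crit_swapVars, ← face_swapVars]
  exact hP.swapVars.not_crit_face hfin.swapVars huc.swapVars hsnd.swapVars hu

end Swap

theorem strongly_newton_nondeg_convenient_implies_strongly_inner_general
    (c : MixedCoeff) (hfin : FiniteSupp c)
    (huc : UConvenient c) (hvc : VConvenient c)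
    (hsnd : StronglyNewtonNonDeg c) :
    StronglyInnerNonDeg c := by
  refine ⟨fun P hP u v hv => hP.not_crit_face hfin hvc hsnd hv,
    fun P hP u v hu => hP.not_crit_face hfin huc hsnd hu,
    fun P hP u v hu hv => hsnd P hP.1 hP.2.1 u v hu hv, fun w hw u v hu hv => ?_⟩
  obtain ⟨Q, hQ1, hQ2, hQ⟩ := hw.exists_face_eq
  exact hQ ▸ hsnd Q hQ1 hQ2 u v hu hv

/-- a convenient, strongly Newton non-degenerate mixed polynomial has a
strongly Newton inner non-degenerate boundary. -/
theorem strongly_newton_nondeg_convenient_implies_strongly_inner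
    (c : MixedCoeff) (hfin : FiniteSupp c)
    (hN : ∃ P, IsFaceWeight c P)
    (huc : UConvenient c) (hvc : VConvenient c)
    (hsnd : StronglyNewtonNonDeg c) :
    StronglyInnerNonDeg c :=
  strongly_newton_nondeg_convenient_implies_strongly_inner_general c hfin huc hvc hsnd
end
end

section
/- Let g : C × S¹ → C be given by g(u, e^{it}) = Π_{j=1}^s (u − u_j(t)) for smooth strand functions u_j defining a geometric braid B, and suppose u_j(t) ≠ 0 for all j, t. Let m ≥ 0. If for every t ∈ [0,2π] and every critical point c(t) of the complex polynomial u ↦ u^m g(u, e^{it}) with u^m g(c(t), e^{it}) ≠ 0 the derivative ∂arg(c(t)^m g(c(t), e^{it}))/∂t is non-zero, then arg(u^m g) : (C × S¹) ∖ (B ∪ ({0} × S¹)) → S¹ has no critical points, i.e., B is P-fibered with O-multiplicity m. -/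
open Complex

noncomputable section

/-- let `B` be a geometric braid with smooth, pairwise distinct,
nowhere-vanishing strands `u_j` and `h(u,t) = u^m Π_j (u − u_j(t))`. Away from the
zeros of `h`, the argument `arg h` is critical at `(u,t)` iff `∂h/∂u = 0` and
`Im((∂h/∂t)/h) = 0` (the latter being `∂ arg(h)/∂t`, which along the curve of critical
points of the polynomial equals `∂ arg(c(t)^m g(c(t),e^{it}))/∂t`). Hence, if at every
critical point of the polynomial `u ↦ h(u,t)` with non-zero critical value the
`t`-derivative of the argument of the critical value is non-zero, then
`arg(u^m g) : (ℂ × S¹) ∖ (B ∪ ({0} × S¹)) → S¹` has no critical points; equivalently,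
the differential of the smooth circle-valued map `h/|h|` never vanishes there: `B` is
P-fibered with O-multiplicity `m`. -/
theorem pfibered_criterion
    (S m : ℕ) (uj : Fin S → ℝ → ℂ)
    (hsm : ∀ j, ContDiff ℝ (⊤ : ℕ∞) (uj j))
    (hdist : ∀ t : ℝ, Function.Injective fun j => uj j t)
    (hnz : ∀ j t, uj j t ≠ 0)
    (h : ℂ → ℝ → ℂ)
    (hdef : h = fun (u : ℂ) (t : ℝ) => u ^ m * ∏ j, (u - uj j t))
    (hyp : ∀ (t : ℝ) (z : ℂ), deriv (fun u : ℂ => h u t) z = 0 → h z t ≠ 0 →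
        (deriv (fun τ : ℝ => h z τ) t / h z t).im ≠ 0) :
    ∀ (u : ℂ) (t : ℝ), u ≠ 0 → (∀ j, u ≠ uj j t) →
      fderiv ℝ (fun x : ℂ × ℝ => h x.1 x.2 / ((‖h x.1 x.2‖ : ℝ) : ℂ)) (u, t) ≠ 0 := by
  intro u t hu0 huj hFzero
  have hujd : ∀ j, Differentiable ℝ (uj j) := fun j => (hsm j).differentiable (by simp)
  have hval : h u t ≠ 0 := by
    rw [hdef]
    exact mul_ne_zero (pow_ne_zero _ hu0)
      (Finset.prod_ne_zero_iff.2 fun j _ => sub_ne_zero.2 (huj j))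
  have hrnz : ‖h u t‖ ≠ 0 := norm_ne_zero_iff.2 hval
  -- differentiability of H := fun x => h x.1 x.2
  have hHd : DifferentiableAt ℝ (fun x : ℂ × ℝ => h x.1 x.2) (u, t) := by
    rw [hdef]
    refine (differentiableAt_fst.pow m).mul ?_
    exact (HasFDerivAt.finset_prod (fun j (_ : j ∈ Finset.univ) =>
      (hasFDerivAt_fst.sub
        (((hujd j) t).hasFDerivAt.comp (u, t) hasFDerivAt_snd)))).differentiableAt
  have hRd : DifferentiableAt ℝ (fun x : ℂ × ℝ => ‖h x.1 x.2‖) (u, t) := hHd.norm ℝ hval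
  have hcoeRd : DifferentiableAt ℝ (fun x : ℂ × ℝ => ((‖h x.1 x.2‖ : ℝ) : ℂ)) (u, t) :=
    Complex.ofRealCLM.differentiableAt.comp _ hRd
  have hcoenz : ((‖h u t‖ : ℝ) : ℂ) ≠ 0 := by exact_mod_cast hrnz
  have hFd : DifferentiableAt ℝ
      (fun x : ℂ × ℝ => h x.1 x.2 / ((‖h x.1 x.2‖ : ℝ) : ℂ)) (u, t) := by
    simp only [div_eq_mul_inv]
    exact hHd.mul (hcoeRd.inv hcoenz)
  have hF0 : HasFDerivAt (fun x : ℂ × ℝ => h x.1 x.2 / ((‖h x.1 x.2‖ : ℝ) : ℂ))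
      (0 : ℂ × ℝ →L[ℝ] ℂ) (u, t) := hFzero ▸ hFd.hasFDerivAt
  set ρ : ℂ × ℝ →L[ℝ] ℝ := fderiv ℝ (fun x : ℂ × ℝ => ‖h x.1 x.2‖) (u, t) with hρ
  have hcoeR : HasFDerivAt (fun x : ℂ × ℝ => ((‖h x.1 x.2‖ : ℝ) : ℂ))
      (Complex.ofRealCLM.comp ρ) (u, t) :=
    (Complex.ofRealCLM.hasFDerivAt).comp _ hRd.hasFDerivAt
  set q : ℂ := h u t / ((‖h u t‖ : ℝ) : ℂ) with hq
  have hqnz : q ≠ 0 := div_ne_zero hval hcoenz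
  -- product rule: H = F * coeR
  have hmul := hF0.fun_mul hcoeR
  have hfun : (fun x : ℂ × ℝ => (h x.1 x.2 / ((‖h x.1 x.2‖ : ℝ) : ℂ)) * ((‖h x.1 x.2‖ : ℝ) : ℂ))
      = fun x : ℂ × ℝ => h x.1 x.2 := by
    funext x
    rcases eq_or_ne (h x.1 x.2) 0 with h0 | h0
    · simp [h0]
    · rw [div_mul_cancel₀]
      exact_mod_cast norm_ne_zero_iff.2 h0
  rw [hfun] at hmul
  have hHL : HasFDerivAt (fun x : ℂ × ℝ => h x.1 x.2)
      (q • (Complex.ofRealCLM.comp ρ)) (u, t) :=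
    hmul.congr_fderiv (by refine ContinuousLinearMap.ext fun w => ?_; simp [hq])
  have hLval : ∀ w : ℂ × ℝ, (q • (Complex.ofRealCLM.comp ρ)) w = q * ((ρ w : ℝ) : ℂ) := by
    intro w; simp [smul_eq_mul]
  -- partial u derivative (complex analytic)
  have hpu : DifferentiableAt ℂ (fun v : ℂ => h v t) u := by
    rw [hdef]
    refine (differentiableAt_pow m).mul ?_
    exact DifferentiableAt.fun_finsetProd fun j _ =>
      differentiableAt_id.sub (differentiableAt_const _)
  have hpuD : HasDerivAt (fun v : ℂ => h v t) (deriv (fun v : ℂ => h v t) u) u :=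
    hpu.hasDerivAt
  set hu' : ℂ := deriv (fun v : ℂ => h v t) u with hhu
  -- the partial map as composition
  have hcompu : HasFDerivAt (fun v : ℂ => h v t)
      ((q • (Complex.ofRealCLM.comp ρ)).comp (ContinuousLinearMap.inl ℝ ℂ ℝ)) u :=
    by have := hHL.comp u (hasFDerivAt_prodMk_left (𝕜 := ℝ) u t); exact this
  have huniqu := hcompu.unique (hpuD.hasFDerivAt.restrictScalars ℝ)
  have hval1 : hu' = q * ((ρ (1, 0) : ℝ) : ℂ) := by
    have := congrArg (fun L : ℂ →L[ℝ] ℂ => L 1) huniqu.symm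
    simpa [hLval] using this
  have hvalI : Complex.I * hu' = q * ((ρ (Complex.I, 0) : ℝ) : ℂ) := by
    have := congrArg (fun L : ℂ →L[ℝ] ℂ => L Complex.I) huniqu.symm
    simpa [hLval, mul_comm] using this
  -- deduce hu' = 0
  have halpha : (ρ (1, 0) : ℝ) = 0 := by
    have h1 : q * (Complex.I * ((ρ (1, 0) : ℝ) : ℂ)) = q * ((ρ (Complex.I, 0) : ℝ) : ℂ) := by
      rw [← hvalI, hval1]; ring
    have h2 := mul_left_cancel₀ hqnz h1
    have := congrArg Complex.im h2
    simpa using this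
  have hu'0 : hu' = 0 := by rw [hval1, halpha]; simp
  -- the t-direction
  have hpt : DifferentiableAt ℝ (fun τ : ℝ => h u τ) t := by
    rw [hdef]
    exact (differentiableAt_const _).mul <|
      DifferentiableAt.fun_finsetProd fun j _ =>
        (differentiableAt_const _).sub ((hujd j) t)
  have hptD : HasDerivAt (fun τ : ℝ => h u τ) (deriv (fun τ : ℝ => h u τ) t) t := hpt.hasDerivAt
  set ht' : ℂ := deriv (fun τ : ℝ => h u τ) t with hht
  have hcompt : HasFDerivAt (fun τ : ℝ => h u τ)
      ((q • (Complex.ofRealCLM.comp ρ)).comp (ContinuousLinearMap.inr ℝ ℂ ℝ)) t :=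
    by have := hHL.comp t (hasFDerivAt_prodMk_right (𝕜 := ℝ) u t); exact this
  have huniqt := hcompt.unique hptD.hasFDerivAt
  have hvalt : ht' = q * ((ρ (0, 1) : ℝ) : ℂ) := by
    have := congrArg (fun L : ℝ →L[ℝ] ℂ => L 1) huniqt.symm
    simpa [hLval] using this
  have him : (ht' / h u t).im = 0 := by
    rw [hvalt, hq]
    have : h u t / ((‖h u t‖ : ℝ) : ℂ) * ((ρ (0, 1) : ℝ) : ℂ) / h u t
        = (((ρ (0, 1) : ℝ) / ‖h u t‖ : ℝ) : ℂ) := by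
      rw [div_mul_eq_mul_div, div_div, mul_comm ((‖h u t‖ : ℝ) : ℂ) (h u t),
        mul_div_mul_left _ _ hval, Complex.ofReal_div]
    rw [this, Complex.ofReal_im]
  exact hyp t u hu'0 hval him
end
end
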